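/- arXiv:1912.08482 — 5 statements merged into one kernel-verified Lean document; each statement's English description precedes it below -/
import Mathlib

section
/- Let B be a set with at least 3 elements and let G be a primitive group of permutations of B. Let a be a nonempty symmetric binary relation on B that is disjoint from the diagonal Δ and invariant under G. Then a∘a ≠ Δ, where ∘ denotes composition of relations. -/
/-- The diagonal relation on `B`, viewed as a set of pairs. -/
def diag (B : Type*) : Set (B × B) := {p | p.1 = p.2}

/-- Composition of binary relations given as sets of pairs. -/
def RelComp {B : Type*} (r s : Set (B × B)) : Set (B × B) :=
  {p | ∃ y, (p.1, y) ∈ r ∧ (y, p.2) ∈ s}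

/-- A binary relation (set of pairs) is invariant under a group `G` of permutations of `B`. -/
def Invariant {B : Type*} (G : Subgroup (Equiv.Perm B)) (r : Set (B × B)) : Prop :=
  ∀ g ∈ G, ∀ p ∈ r, (g p.1, g p.2) ∈ r

/-- A set of pairs is an equivalence relation. -/
def IsEquivRel {B : Type*} (r : Set (B × B)) : Prop :=
  (∀ x, (x, x) ∈ r) ∧ (∀ x y, (x, y) ∈ r → (y, x) ∈ r) ∧
    (∀ x y z, (x, y) ∈ r → (y, z) ∈ r → (x, z) ∈ r)

/-- A group of permutations of `B` is primitive if the only `G`-invariant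
equivalence relations on `B` are the diagonal and `B × B`. -/
def Primitive {B : Type*} (G : Subgroup (Equiv.Perm B)) : Prop :=
  ∀ r : Set (B × B), IsEquivRel r → Invariant G r → r = diag B ∨ r = Set.univ

/-! If `a ∘ a = Δ` then, `a` being symmetric, `a ∪ Δ` is a `G`-invariant equivalence relation.
Primitivity makes it `Δ`, impossible since `a` is nonempty and off the diagonal, or `B × B`; but
then any three distinct points `x, y, z` give `(x, z) ∈ a ∘ a`, off the diagonal. -/

section

variable {B : Type*}

theorem isEquivRel_union_diag {r : Set (B × B)} (hsymm : ∀ x y, (x, y) ∈ r → (y, x) ∈ r)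
    (htrans : RelComp r r ⊆ r ∪ diag B) : IsEquivRel (r ∪ diag B) := by
  refine ⟨fun x => Or.inr rfl, ?_, ?_⟩
  · rintro x y (hxy | hxy)
    · exact Or.inl (hsymm x y hxy)
    · exact Or.inr (Eq.symm hxy)
  · rintro x y z (hxy | hxy) (hyz | hyz)
    · exact htrans ⟨y, hxy, hyz⟩
    · exact Or.inl ((show y = z from hyz) ▸ hxy)
    · exact (show x = y from hxy) ▸ Or.inl hyz
    · exact Or.inr ((show x = y from hxy).trans hyz)

theorem invariant_diag (G : Subgroup (Equiv.Perm B)) : Invariant G (diag B) :=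
  fun g _ _ hp => congrArg g hp

theorem Invariant.union {G : Subgroup (Equiv.Perm B)} {r s : Set (B × B)} (hr : Invariant G r)
    (hs : Invariant G s) : Invariant G (r ∪ s) := by
  rintro g hg p (hp | hp)
  · exact Or.inl (hr g hg p hp)
  · exact Or.inr (hs g hg p hp)

theorem mem_of_union_diag_eq_univ {r : Set (B × B)} (h : r ∪ diag B = Set.univ) {x y : B}
    (hxy : x ≠ y) : (x, y) ∈ r :=
  (h.symm ▸ Set.mem_univ (x, y) : (x, y) ∈ r ∪ diag B).resolve_right hxy

end

/-- if `G` is primitive on a set with at least 3 elements and `a`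
is a nonempty symmetric `G`-invariant relation disjoint from the diagonal,
then `a ∘ a ≠ Δ`. -/
theorem stmt1 {B : Type*} (h3 : ∃ x y z : B, x ≠ y ∧ y ≠ z ∧ x ≠ z)
    (G : Subgroup (Equiv.Perm B)) (hG : Primitive G)
    (a : Set (B × B)) (ha_ne : a.Nonempty)
    (ha_symm : ∀ x y : B, (x, y) ∈ a → (y, x) ∈ a)
    (ha_disj : a ∩ diag B = ∅)
    (ha_inv : Invariant G a) :
    RelComp a a ≠ diag B := by
  intro hcomp
  have hequiv : IsEquivRel (a ∪ diag B) :=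
    isEquivRel_union_diag ha_symm (hcomp ▸ Set.subset_union_right)
  rcases hG _ hequiv (ha_inv.union (invariant_diag G)) with hdiag | huniv
  · have ha_inter : a ∩ diag B = a := Set.inter_eq_left.mpr (Set.union_eq_right.mp hdiag)
    exact ha_ne.ne_empty (ha_inter ▸ ha_disj)
  · obtain ⟨x, y, z, hxy, hyz, hxz⟩ := h3
    have hxz_comp : (x, z) ∈ RelComp a a :=
      ⟨y, mem_of_union_diag_eq_univ huniv hxy, mem_of_union_diag_eq_univ huniv hyz⟩
    exact hxz (show (x, z) ∈ diag B from hcomp ▸ hxz_comp)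
end

section
/- Let B be a set with at least 3 elements and let G be a primitive group of permutations of B such that the componentwise action of G on B×B has only finitely many orbits. Let a be a nonempty symmetric binary relation on B that is disjoint from the diagonal Δ and invariant under G. Then there exists k ≥ 1 such that for all x, y ∈ B there is an a-walk of length 2k from x to y. In particular, any two elements of B are joined by an a-walk of even length. -/
/-- An `a`-walk of length `n` from `x` to `y`. -/
def Walk {B : Type*} (a : Set (B × B)) (n : ℕ) (x y : B) : Prop :=
  ∃ b : ℕ → B, b 0 = x ∧ b n = y ∧ ∀ i < n, (b i, b (i + 1)) ∈ a

theorem Set.Finite.range_of_factorsThrough {α β γ : Type*} {f : α → γ} {o : α → β}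
    (hf : f.FactorsThrough o) (ho : (Set.range o).Finite) : (Set.range f).Finite := by
  have := ho.to_subtype
  refine (Set.finite_range fun s : Set.range o => f s.2.choose).subset ?_
  rintro _ ⟨x, rfl⟩
  exact ⟨⟨o x, x, rfl⟩, hf (Exists.choose_spec (⟨x, rfl⟩ : ∃ y, o y = o x))⟩

namespace Walk

variable {B : Type*} {a : Set (B × B)} {n m : ℕ} {x y z : B}

theorem zero_iff : Walk a 0 x y ↔ x = y :=
  ⟨fun ⟨_, hb0, hby, _⟩ => hb0 ▸ hby, fun h => ⟨fun _ => x, rfl, h, by simp⟩⟩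

theorem succ_iff : Walk a (n + 1) x z ↔ ∃ y, Walk a n x y ∧ (y, z) ∈ a := by
  constructor
  · rintro ⟨b, hb0, hbz, hb⟩
    exact ⟨b n, ⟨b, hb0, rfl, fun i hi => hb i (by omega)⟩, hbz ▸ hb n (by omega)⟩
  · rintro ⟨y, ⟨b, hb0, hby, hb⟩, hyz⟩
    refine ⟨Function.update b (n + 1) z, by simp [hb0], by simp, fun i hi => ?_⟩
    rw [Function.update_of_ne (by omega)]
    rcases Nat.lt_succ_iff_lt_or_eq.1 hi with hi | rfl
    · rw [Function.update_of_ne (by omega)]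
      exact hb i hi
    · simpa [hby] using hyz

theorem append (h₁ : Walk a n x y) (h₂ : Walk a m y z) : Walk a (n + m) x z := by
  induction m generalizing z with
  | zero => exact zero_iff.1 h₂ ▸ h₁
  | succ m ih =>
    obtain ⟨w, hw, hwz⟩ := succ_iff.1 h₂
    exact succ_iff.2 ⟨w, ih hw, hwz⟩

theorem reverse (hs : ∀ x y : B, (x, y) ∈ a → (y, x) ∈ a) (h : Walk a n x y) :
    Walk a n y x := by
  obtain ⟨b, hb0, hby, hb⟩ := h
  refine ⟨fun i => b (n - i), by simpa using hby, by simpa using hb0, fun i hi => ?_⟩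
  have hsucc : n - i = n - (i + 1) + 1 := by omega
  simpa only [hsucc] using hs _ _ (hb (n - (i + 1)) (by omega))

theorem map {f : B → B} (hf : ∀ p ∈ a, (f p.1, f p.2) ∈ a) (h : Walk a n x y) :
    Walk a n (f x) (f y) := by
  obtain ⟨b, hb0, hby, hb⟩ := h
  exact ⟨f ∘ b, by simp [hb0], by simp [hby], fun i hi => hf _ (hb i hi)⟩

theorem two_mul_self (hyz : (y, z) ∈ a) (hzy : (z, y) ∈ a) : ∀ j, Walk a (2 * j) y y
  | 0 => zero_iff.2 rfl
  | j + 1 => succ_iff.2 ⟨z, succ_iff.2 ⟨y, two_mul_self hyz hzy j, hyz⟩, hzy⟩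

theorem perm_iff {G : Subgroup (Equiv.Perm B)} (ha : Invariant G a) {g : Equiv.Perm B}
    (hg : g ∈ G) : Walk a n (g x) (g y) ↔ Walk a n x y := by
  refine ⟨fun h => ?_, map (ha g hg)⟩
  simpa using map (ha g⁻¹ (inv_mem hg)) h

end Walk

section

variable {B : Type*} {G : Subgroup (Equiv.Perm B)}

theorem Primitive.eq_univ_of_mem (hG : Primitive G) {r : Set (B × B)} (hr : IsEquivRel r)
    (hinv : Invariant G r) {u v : B} (huv : (u, v) ∈ r) (hne : u ≠ v) : r = Set.univ :=
  (hG r hr hinv).resolve_left fun h => hne (h ▸ huv : (u, v) ∈ diag B)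

/-- `S` is the only nontrivial class of a `G`-invariant equivalence relation. -/
theorem Primitive.eq_univ_of_invariant_set (hG : Primitive G) {S : Set B}
    (hS : ∀ g ∈ G, ∀ x ∈ S, g x ∈ S) {u v : B} (hu : u ∈ S) (hv : v ∈ S) (hne : u ≠ v) :
    S = Set.univ := by
  let r : Set (B × B) := {p | p.1 = p.2 ∨ (p.1 ∈ S ∧ p.2 ∈ S)}
  have hr : IsEquivRel r := by
    refine ⟨fun x => Or.inl rfl, ?_, ?_⟩
    · rintro x y (h | ⟨hx, hy⟩)
      exacts [Or.inl h.symm, Or.inr ⟨hy, hx⟩]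
    · rintro x y z (hxy | ⟨hx, hy⟩) (hyz | ⟨hy', hz⟩)
      · exact Or.inl (hxy.trans hyz)
      · exact Or.inr ⟨(show x = y from hxy) ▸ hy', hz⟩
      · exact Or.inr ⟨hx, (show y = z from hyz) ▸ hy⟩
      · exact Or.inr ⟨hx, hz⟩
  have hinv : Invariant G r := by
    rintro g hg ⟨x, y⟩ (h | ⟨hx, hy⟩)
    exacts [Or.inl (congrArg g h), Or.inr ⟨hS g hg x hx, hS g hg y hy⟩]
  have hr_univ := hG.eq_univ_of_mem hr hinv (Or.inr ⟨hu, hv⟩ : (u, v) ∈ r) hne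
  refine Set.eq_univ_of_forall fun x => ?_
  rcases (hr_univ ▸ Set.mem_univ (x, u) : (x, u) ∈ r) with h | ⟨hx, -⟩
  exacts [(show x = u from h) ▸ hu, hx]

end

def walkRel {B : Type*} (a : Set (B × B)) (d : ℕ) : Set (B × B) :=
  {p | ∃ m, Walk a (d * m) p.1 p.2}

section

variable {B : Type*} {a : Set (B × B)}

theorem isEquivRel_walkRel (hs : ∀ x y : B, (x, y) ∈ a → (y, x) ∈ a) (d : ℕ) :
    IsEquivRel (walkRel a d) := by
  refine ⟨fun x => ⟨0, Walk.zero_iff.2 rfl⟩, fun x y ⟨m, h⟩ => ⟨m, h.reverse hs⟩, ?_⟩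
  rintro x y z ⟨m, hxy⟩ ⟨m', hyz⟩
  exact ⟨m + m', by simpa only [Nat.mul_add] using hxy.append hyz⟩

theorem invariant_walkRel {G : Subgroup (Equiv.Perm B)} (ha : Invariant G a) (d : ℕ) :
    Invariant G (walkRel a d) :=
  fun _ hg _ ⟨m, h⟩ => ⟨m, (Walk.perm_iff ha hg).2 h⟩

end

section

variable {B : Type*} {G : Subgroup (Equiv.Perm B)} {a : Set (B × B)} {u v : B}

theorem Primitive.exists_mem_of_invariant (hG : Primitive G) (ha : Invariant G a)
    (hs : ∀ x y : B, (x, y) ∈ a → (y, x) ∈ a) (huv : (u, v) ∈ a) (hne : u ≠ v) (x : B) :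
    ∃ y, (x, y) ∈ a := by
  have hS : ∀ g ∈ G, ∀ x ∈ {x | ∃ y, (x, y) ∈ a}, g x ∈ {x | ∃ y, (x, y) ∈ a} :=
    fun g hg x ⟨y, hxy⟩ => ⟨g y, ha g hg _ hxy⟩
  have hdom := hG.eq_univ_of_invariant_set hS ⟨v, huv⟩ ⟨u, hs _ _ huv⟩ hne
  exact Set.eq_univ_iff_forall.1 hdom x

theorem walkRel_two_eq_univ (h3 : ∃ x y z : B, x ≠ y ∧ y ≠ z ∧ x ≠ z) (hG : Primitive G)
    (ha : Invariant G a) (hs : ∀ x y : B, (x, y) ∈ a → (y, x) ∈ a) (huv : (u, v) ∈ a)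
    (hne : u ≠ v) : walkRel a 2 = Set.univ := by
  refine (hG _ (isEquivRel_walkRel hs 2) (invariant_walkRel ha 2)).resolve_left fun heven => ?_
  have hconn := hG.eq_univ_of_mem (isEquivRel_walkRel hs 1) (invariant_walkRel ha 1)
    ⟨1, Walk.succ_iff.2 ⟨u, Walk.zero_iff.2 rfl, huv⟩⟩ hne
  have hodd : ∀ {x y : B} {n : ℕ}, x ≠ y → Walk a n x y → Odd n := by
    intro x y n hxy h
    refine Nat.not_even_iff_odd.1 fun ⟨m, hm⟩ => hxy ?_
    have hxy2 : (x, y) ∈ walkRel a 2 := ⟨m, two_mul m ▸ hm ▸ h⟩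
    exact (heven ▸ hxy2 : (x, y) ∈ diag B)
  have hwalk : ∀ x y : B, ∃ n, Walk a n x y := fun x y => by
    obtain ⟨n, h⟩ := (hconn ▸ Set.mem_univ (x, y) : (x, y) ∈ walkRel a 1)
    exact ⟨n, one_mul n ▸ h⟩
  obtain ⟨x, y, z, hxy, hyz, hxz⟩ := h3
  obtain ⟨n, hwxy⟩ := hwalk x y
  obtain ⟨n', hwyz⟩ := hwalk y z
  exact Nat.not_even_iff_odd.2 (hodd hxz (hwxy.append hwyz))
    ((hodd hxy hwxy).add_odd (hodd hyz hwyz))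

theorem exists_uniform_two_mul_walk
    (hfin : Set.Finite
      (Set.range fun p : B × B => {q : B × B | ∃ g ∈ G, (g p.1, g p.2) = q}))
    (ha : Invariant G a) (hs : ∀ x y : B, (x, y) ∈ a → (y, x) ∈ a)
    (hnbr : ∀ x : B, ∃ y, (x, y) ∈ a) (heven : walkRel a 2 = Set.univ) :
    ∃ k : ℕ, 1 ≤ k ∧ ∀ x y : B, Walk a (2 * k) x y := by
  let d : B × B → ℕ := fun p => sInf {m | Walk a (2 * m) p.1 p.2}
  have hd : ∀ p, Walk a (2 * d p) p.1 p.2 := fun p => Nat.sInf_mem (heven ▸ Set.mem_univ p)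
  have hfactor : d.FactorsThrough
      fun p : B × B => {q : B × B | ∃ g ∈ G, (g p.1, g p.2) = q} := by
    intro p q hpq
    obtain ⟨g, hg, rfl⟩ : q ∈ {r : B × B | ∃ g ∈ G, (g p.1, g p.2) = r} := by
      simp only at hpq
      exact hpq ▸ ⟨1, one_mem G, rfl⟩
    simp only [d, Walk.perm_iff ha hg]
  obtain ⟨K, hK⟩ := (hfin.range_of_factorsThrough hfactor).bddAbove
  refine ⟨K + 1, Nat.le_add_left 1 K, fun x y => ?_⟩
  obtain ⟨z, hyz⟩ := hnbr y
  have hpad := (hd (x, y)).append (Walk.two_mul_self hyz (hs _ _ hyz) (K + 1 - d (x, y)))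
  rwa [← mul_add, Nat.add_sub_cancel' ((hK ⟨(x, y), rfl⟩).trans K.le_succ)] at hpad

end

/-- if `G` is primitive on a set with at least 3 elements, has
finitely many orbits on pairs, and `a` is a nonempty symmetric `G`-invariant
relation disjoint from the diagonal, then there is a uniform even walk length
`2k` (with `k ≥ 1`) connecting any two elements; in particular any two elements
are joined by an `a`-walk of even length. -/
theorem stmt3 {B : Type*} (h3 : ∃ x y z : B, x ≠ y ∧ y ≠ z ∧ x ≠ z)
    (G : Subgroup (Equiv.Perm B)) (hG : Primitive G)
    (hfin : Set.Finite
      (Set.range fun p : B × B => {q : B × B | ∃ g ∈ G, (g p.1, g p.2) = q}))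
    (a : Set (B × B)) (ha_ne : a.Nonempty)
    (ha_symm : ∀ x y : B, (x, y) ∈ a → (y, x) ∈ a)
    (ha_disj : a ∩ diag B = ∅)
    (ha_inv : Invariant G a) :
    (∃ k : ℕ, 1 ≤ k ∧ ∀ x y : B, Walk a (2 * k) x y) ∧
      ∀ x y : B, ∃ m : ℕ, Walk a (2 * m) x y := by
  obtain ⟨⟨u, v⟩, huv⟩ := ha_ne
  have hne : u ≠ v := fun h => (ha_disj ▸ ⟨huv, h⟩ : (u, v) ∈ (∅ : Set (B × B)))
  have heven := walkRel_two_eq_univ h3 hG ha_inv ha_symm huv hne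
  refine ⟨exists_uniform_two_mul_walk hfin ha_inv ha_symm
    (hG.exists_mem_of_invariant ha_inv ha_symm huv hne) heven, fun x y => ?_⟩
  exact (heven ▸ Set.mem_univ (x, y) : (x, y) ∈ walkRel a 2)
end

section
/- Let a be a symmetric, irreflexive, triangle-free binary relation on a set B, and suppose there exists k ≥ 1 such that for all x, y ∈ B there is an a-walk of length 2k from x to y. Let Δ be the diagonal of B and R := {(x,y,z) ∈ B³ : (x,y) ∈ a ∪ Δ, (y,z) ∈ a ∪ Δ, (x,z) ∈ a}. Let n ≥ 1 and let f : Bⁿ → B be an operation that preserves R (if (xᵢ,yᵢ,zᵢ) ∈ R for all i ≤ n, then (f(x),f(y),f(z)) ∈ R) and is conservative on (a ∪ Δ)-edges (if (xᵢ,yᵢ) ∈ a ∪ Δ for all i ≤ n, then (f(x),f(y)) ∈ a ∪ Δ). Then f is {Δ,a}-canonical: for all x, y, u, v ∈ Bⁿ such that for every i ≤ n one has (xᵢ,yᵢ) ∈ a ∪ Δ, (uᵢ,vᵢ) ∈ a ∪ Δ, and ((xᵢ,yᵢ) ∈ a if and only if (uᵢ,vᵢ) ∈ a), it holds that (f(x),f(y))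 ∈ a if and only if (f(u),f(v)) ∈ a. -/
/-!
If `a` is triangle-free and `(p, q, r) ∈ R`, then `(p, q) ∈ a` exactly when `(q, r) ∉ a`. Hence along
a sequence in which every three consecutive entries form an `R`-triple (a zigzag), membership of
consecutive pairs in `a` alternates, and agrees at positions `0` and `2m`. In each coordinate the
walks of length `2k` give a zigzag of length `2(2k + 1)` from `(xᵢ, yᵢ)` to `(uᵢ, vᵢ)`: list a walk
with every vertex repeated twice, shifted by one place when `(xᵢ, yᵢ) ∈ a`. As `f` preserves `R`,
applying `f` to these tuples gives a zigzag from `(f x, f y)` to `(f u, f v)`.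
-/

section Zigzag

variable {B : Type*} (a : Set (B × B))

def IsRTriple (p q r : B) : Prop :=
  (p, q) ∈ a ∪ diag B ∧ (q, r) ∈ a ∪ diag B ∧ (p, r) ∈ a

def IsZigzag (L : ℕ) (z : ℕ → B) : Prop :=
  ∀ t < L, IsRTriple a (z t) (z (t + 1)) (z (t + 2))

variable {a}

theorem IsRTriple.mem_iff_not_mem (htf : ∀ p q r : B, (p, q) ∈ a → (q, r) ∈ a → (p, r) ∉ a)
    {p q r : B} (h : IsRTriple a p q r) : (p, q) ∈ a ↔ (q, r) ∉ a := by
  refine ⟨fun hpq hqr => htf p q r hpq hqr h.2.2, fun hqr => ?_⟩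
  obtain rfl : q = r := h.2.1.resolve_left hqr
  exact h.2.2

theorem iff_of_forall_iff_not_succ {P : ℕ → Prop} {m : ℕ}
    (h : ∀ t < 2 * m, (P t ↔ ¬P (t + 1))) : P 0 ↔ P (2 * m) := by
  induction m with
  | zero => rfl
  | succ m ih =>
    show P 0 ↔ P (2 * m + 1 + 1)
    rw [ih fun t ht => h t (by omega), h (2 * m) (by omega), h (2 * m + 1) (by omega), not_not]

theorem IsZigzag.mem_iff (htf : ∀ p q r : B, (p, q) ∈ a → (q, r) ∈ a → (p, r) ∉ a)
    {m : ℕ} {z : ℕ → B} (hz : IsZigzag a (2 * m) z) :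
    (z 0, z 1) ∈ a ↔ (z (2 * m), z (2 * m + 1)) ∈ a :=
  iff_of_forall_iff_not_succ (P := fun t => (z t, z (t + 1)) ∈ a) fun t ht =>
    (hz t ht).mem_iff_not_mem htf

theorem IsZigzag.mono {L L' : ℕ} {z : ℕ → B} (hz : IsZigzag a L z) (h : L' ≤ L) :
    IsZigzag a L' z :=
  fun t ht => hz t (by omega)

theorem IsZigzag.shift {L : ℕ} {z : ℕ → B} (hz : IsZigzag a (L + 1) z) :
    IsZigzag a L fun t => z (t + 1) :=
  fun t ht => hz (t + 1) (by omega)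

theorem IsZigzag.comp {ι : Type*} {L : ℕ} (f : (ι → B) → B)
    (hf : ∀ x y z : ι → B, (∀ i, IsRTriple a (x i) (y i) (z i)) → IsRTriple a (f x) (f y) (f z))
    {w : ℕ → ι → B} (hw : ∀ i, IsZigzag a L fun t => w t i) :
    IsZigzag a L fun t => f (w t) :=
  fun t ht => hf _ _ _ fun i => hw i t ht

theorem isZigzag_double {L : ℕ} {e : ℕ → B} (he : ∀ j < L, (e j, e (j + 1)) ∈ a) :
    IsZigzag a (2 * L) fun t => e (t / 2) := by
  intro t ht
  obtain ⟨j, rfl | rfl⟩ := Nat.even_or_odd' t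
  · have h₀ : 2 * j / 2 = j := by omega
    have h₁ : (2 * j + 1) / 2 = j := by omega
    have h₂ : (2 * j + 2) / 2 = j + 1 := by omega
    simp only [IsRTriple, h₀, h₁, h₂]
    exact ⟨Or.inr rfl, Or.inl (he j (by omega)), he j (by omega)⟩
  · have h₀ : (2 * j + 1) / 2 = j := by omega
    have h₁ : (2 * j + 1 + 1) / 2 = j + 1 := by omega
    have h₂ : (2 * j + 1 + 2) / 2 = j + 1 := by omega
    simp only [IsRTriple, h₀, h₁, h₂]
    exact ⟨Or.inl (he j (by omega)), Or.inr rfl, he j (by omega)⟩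

end Zigzag

section WalkSequences

variable {B : Type*} {a : Set (B × B)}

theorem Walk.exists_mem_of_pos {m : ℕ} {x y : B} (h : Walk a m x y) (hm : 0 < m) :
    ∃ c, (x, c) ∈ a := by
  obtain ⟨b, hb0, -, hb⟩ := h
  exact ⟨b 1, hb0 ▸ hb 0 hm⟩

theorem forall_mem_cons {L : ℕ} {p : B} {b : ℕ → B} (hp : (p, b 0) ∈ a)
    (hb : ∀ j < L, (b j, b (j + 1)) ∈ a) :
    ∀ j < L + 1, ((fun | 0 => p | j + 1 => b j : ℕ → B) j,
      (fun | 0 => p | j + 1 => b j : ℕ → B) (j + 1)) ∈ a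
  | 0, _ => hp
  | j + 1, hj => hb j (by omega)

theorem forall_mem_update {L : ℕ} {s : B} {e : ℕ → B} (he : ∀ j < L, (e j, e (j + 1)) ∈ a)
    (hs : (e L, s) ∈ a) :
    ∀ j < L + 1, (Function.update e (L + 1) s j, Function.update e (L + 1) s (j + 1)) ∈ a := by
  intro j hj
  rw [Function.update_of_ne (by omega)]
  rcases Nat.lt_succ_iff_lt_or_eq.mp hj with hj | rfl
  · rw [Function.update_of_ne (by omega)]
    exact he j hj
  · rwa [Function.update_self]

theorem exists_isZigzag_of_mem {m : ℕ} {p q r s : B} (hpq : (p, q) ∈ a) (hrs : (r, s) ∈ a)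
    (hqr : Walk a m q r) :
    ∃ z : ℕ → B, z 0 = p ∧ z 1 = q ∧ z (2 * (m + 1)) = r ∧ z (2 * (m + 1) + 1) = s ∧
      IsZigzag a (2 * (m + 1)) z := by
  obtain ⟨b, rfl, rfl, hb⟩ := hqr
  let e : ℕ → B := Function.update (fun | 0 => p | j + 1 => b j) (m + 2) s
  have he : ∀ j < m + 2, (e j, e (j + 1)) ∈ a := forall_mem_update (forall_mem_cons hpq hb) hrs
  have hz : IsZigzag a (2 * (m + 1) + 1) fun t => e (t / 2) := (isZigzag_double he).mono (by omega)
  -- `z = p, b 0, b 0, b 1, b 1, …, b m, b m, s`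
  refine ⟨fun t => e ((t + 1) / 2), ?_, ?_, ?_, ?_, hz.shift⟩
  · simp [e]
  · simp [e]
  · have h : (2 * (m + 1) + 1) / 2 = m + 1 := by omega
    simp [e, h]
  · have h : (2 * (m + 1) + 1 + 1) / 2 = m + 2 := by omega
    simp [e, h]

theorem exists_isZigzag_of_neighbor {m : ℕ} {p c r : B} (hpc : (p, c) ∈ a)
    (hcr : Walk a m c r) :
    ∃ z : ℕ → B, z 0 = p ∧ z 1 = p ∧ z (2 * (m + 1)) = r ∧ z (2 * (m + 1) + 1) = r ∧
      IsZigzag a (2 * (m + 1)) z := by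
  obtain ⟨b, rfl, rfl, hb⟩ := hcr
  let e : ℕ → B := fun | 0 => p | j + 1 => b j
  -- `z = p, p, b 0, b 0, b 1, b 1, …, b m, b m`
  refine ⟨fun t => e (t / 2), rfl, rfl, ?_, ?_, isZigzag_double (forall_mem_cons hpc hb)⟩
  · have h : 2 * (m + 1) / 2 = m + 1 := by omega
    simp [e, h]
  · have h : (2 * (m + 1) + 1) / 2 = m + 1 := by omega
    simp [e, h]

theorem exists_isZigzag {k : ℕ} (hk : 1 ≤ k) (hwalk : ∀ x y : B, Walk a (2 * k) x y)
    {p q r s : B} (hpq : (p, q) ∈ a ∪ diag B) (hrs : (r, s) ∈ a ∪ diag B)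
    (hiff : (p, q) ∈ a ↔ (r, s) ∈ a) :
    ∃ z : ℕ → B, z 0 = p ∧ z 1 = q ∧ z (2 * (2 * k + 1)) = r ∧ z (2 * (2 * k + 1) + 1) = s ∧
      IsZigzag a (2 * (2 * k + 1)) z := by
  by_cases ha : (p, q) ∈ a
  · exact exists_isZigzag_of_mem ha (hiff.mp ha) (hwalk q r)
  · have hpq : p = q := hpq.resolve_left ha
    have hrs : r = s := hrs.resolve_left (hiff.not.mp ha)
    obtain ⟨c, hpc⟩ := (hwalk p p).exists_mem_of_pos (by omega)
    subst hpq hrs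
    exact exists_isZigzag_of_neighbor hpc (hwalk c r)

end WalkSequences

theorem stmt7_general {B : Type*} (a : Set (B × B))
    (ha_tf : ∀ p q r : B, (p, q) ∈ a → (q, r) ∈ a → (p, r) ∉ a)
    (hwalk : ∃ k : ℕ, 1 ≤ k ∧ ∀ x y : B, Walk a (2 * k) x y)
    (n : ℕ) (f : (Fin n → B) → B)
    (hR : ∀ x y z : Fin n → B,
      (∀ i, (x i, y i) ∈ a ∪ diag B ∧ (y i, z i) ∈ a ∪ diag B ∧ (x i, z i) ∈ a) →
      ((f x, f y) ∈ a ∪ diag B ∧ (f y, f z) ∈ a ∪ diag B ∧ (f x, f z) ∈ a)) :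
    ∀ x y u v : Fin n → B,
      (∀ i, (x i, y i) ∈ a ∪ diag B ∧ (u i, v i) ∈ a ∪ diag B ∧
        ((x i, y i) ∈ a ↔ (u i, v i) ∈ a)) →
      ((f x, f y) ∈ a ↔ (f u, f v) ∈ a) := by
  obtain ⟨k, hk, hwalk⟩ := hwalk
  intro x y u v h
  choose z hz0 hz1 hzu hzv hz using fun i => exists_isZigzag hk hwalk (h i).1 (h i).2.1 (h i).2.2
  have hfz : IsZigzag a (2 * (2 * k + 1)) fun t => f fun i => z i t := IsZigzag.comp f hR hz
  have hx : (fun i => z i 0) = x := funext hz0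
  have hy : (fun i => z i 1) = y := funext hz1
  have hu : (fun i => z i (2 * (2 * k + 1))) = u := funext hzu
  have hv : (fun i => z i (2 * (2 * k + 1) + 1)) = v := funext hzv
  simpa only [hx, hy, hu, hv] using hfz.mem_iff ha_tf

/-- let `a` be symmetric, irreflexive and triangle-free such that
for some `k ≥ 1` any two elements are joined by an `a`-walk of length `2k`.
Every operation `f : Bⁿ → B` (with `n ≥ 1`) that preserves the relation
`R = {(x,y,z) : (x,y) ∈ a ∪ Δ, (y,z) ∈ a ∪ Δ, (x,z) ∈ a}` and is conservative
on `(a ∪ Δ)`-edges is `{Δ,a}`-canonical. -/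
theorem stmt7 {B : Type*} (a : Set (B × B))
    (ha_symm : ∀ x y : B, (x, y) ∈ a → (y, x) ∈ a)
    (ha_irr : ∀ x : B, (x, x) ∉ a)
    (ha_tf : ∀ p q r : B, (p, q) ∈ a → (q, r) ∈ a → (p, r) ∉ a)
    (hwalk : ∃ k : ℕ, 1 ≤ k ∧ ∀ x y : B, Walk a (2 * k) x y)
    (n : ℕ) (hn : 1 ≤ n) (f : (Fin n → B) → B)
    (hR : ∀ x y z : Fin n → B,
      (∀ i, (x i, y i) ∈ a ∪ diag B ∧ (y i, z i) ∈ a ∪ diag B ∧ (x i, z i) ∈ a) →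
      ((f x, f y) ∈ a ∪ diag B ∧ (f y, f z) ∈ a ∪ diag B ∧ (f x, f z) ∈ a))
    (hcons : ∀ x y : Fin n → B,
      (∀ i, (x i, y i) ∈ a ∪ diag B) → (f x, f y) ∈ a ∪ diag B) :
    ∀ x y u v : Fin n → B,
      (∀ i, (x i, y i) ∈ a ∪ diag B ∧ (u i, v i) ∈ a ∪ diag B ∧
        ((x i, y i) ∈ a ↔ (u i, v i) ∈ a)) →
      ((f x, f y) ∈ a ↔ (f u, f v) ∈ a) :=
  stmt7_general a ha_tf hwalk n f hR
end

section
/- Let e be an equivalence relation on a set B with exactly two equivalence classes, at least one of which has at least two elements. Let Δ be the diagonal of B, a := e∖Δ, and n := (B×B)∖e. Then there is no ternary operation f : B³ → B that is edge-conservative with respect to the partition {Δ, a, n} of B×B (for all x, y ∈ B³, (f(x),f(y)) ∈ r₁ ∪ r₂ ∪ r₃, where rᵢ ∈ {Δ, a, n} is the part containing (xᵢ,yᵢ)) and cyclic modulo e (for all x₁, x₂, x₃ ∈ B, (f(x₁,x₂,x₃), f(x₃,x₁,x₂)) ∈ e). -/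
/-- Given an equivalence relation `e` on `B`, the set `B × B` is partitioned
into the diagonal `Δ`, the relation `a = e ∖ Δ`, and `n = (B × B) ∖ e`.
`SamePart e p q r s` says that `(r, s)` lies in the same part of this
partition as `(p, q)`. -/
def SamePart {B : Type*} (e : B → B → Prop) (p q r s : B) : Prop :=
  (p = q ∧ r = s) ∨ (p ≠ q ∧ e p q ∧ r ≠ s ∧ e r s) ∨ (¬ e p q ∧ ¬ e r s)

/-!
Fix `c` outside the class of `d₁ ~ d₂`, `d₁ ≠ d₂`. Put `r = f(c,d₁,d₂)`, `s = f(d₁,c,d₂)`,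
`t = f(d₂,d₁,c)` and `p = f(c,d₁,d₁)`. Cyclicity and preservation of `e` make all four
`e`-equivalent. Edge-conservativity applied to two `e`-related values forces them to be equal when
every coordinate pair lying in `e` is diagonal, and distinct when every such pair is off-diagonal.
Comparing coordinates gives `r = s`, `r = t`, `p = t` and `p ≠ s`, which is contradictory.
-/

section

variable {B : Type*} {e : B → B → Prop}

namespace SamePart

variable {p q u v : B}

theorem rel (hrefl : ∀ x, e x x) (hs : SamePart e p q u v) (h : e p q) : e u v := by
  rcases hs with ⟨_, rfl⟩ | ⟨_, _, _, huv⟩ | ⟨hpq, _⟩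
  · exact hrefl u
  · exact huv
  · exact absurd h hpq

theorem eq_of_rel (hs : SamePart e p q u v) (h : e u v)
    (hpq : e p q → p = q) : u = v := by
  rcases hs with ⟨_, huv⟩ | ⟨hne, he, _⟩ | ⟨_, huv⟩
  · exact huv
  · exact absurd (hpq he) hne
  · exact absurd h huv

theorem ne_of_rel (hrefl : ∀ x, e x x) (hs : SamePart e p q u v) (h : e u v)
    (hpq : e p q → p ≠ q) : u ≠ v := by
  rcases hs with ⟨heq, _⟩ | ⟨_, _, huv, _⟩ | ⟨_, huv⟩
  · exact absurd heq (hpq (heq ▸ hrefl p))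
  · exact huv
  · exact absurd h huv

end SamePart

def IsEdgeConservative (e : B → B → Prop) (f : B → B → B → B) : Prop :=
  ∀ x₁ x₂ x₃ y₁ y₂ y₃ : B,
    SamePart e x₁ y₁ (f x₁ x₂ x₃) (f y₁ y₂ y₃) ∨
    SamePart e x₂ y₂ (f x₁ x₂ x₃) (f y₁ y₂ y₃) ∨
    SamePart e x₃ y₃ (f x₁ x₂ x₃) (f y₁ y₂ y₃)

namespace IsEdgeConservative

variable {f : B → B → B → B} {x₁ x₂ x₃ y₁ y₂ y₃ : B}

theorem rel (hrefl : ∀ x, e x x) (hf : IsEdgeConservative e f)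
    (h₁ : e x₁ y₁) (h₂ : e x₂ y₂) (h₃ : e x₃ y₃) : e (f x₁ x₂ x₃) (f y₁ y₂ y₃) := by
  rcases hf x₁ x₂ x₃ y₁ y₂ y₃ with hs | hs | hs
  · exact hs.rel hrefl h₁
  · exact hs.rel hrefl h₂
  · exact hs.rel hrefl h₃

theorem eq_of_rel (hf : IsEdgeConservative e f)
    (h : e (f x₁ x₂ x₃) (f y₁ y₂ y₃))
    (h₁ : e x₁ y₁ → x₁ = y₁) (h₂ : e x₂ y₂ → x₂ = y₂) (h₃ : e x₃ y₃ → x₃ = y₃) :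
    f x₁ x₂ x₃ = f y₁ y₂ y₃ := by
  rcases hf x₁ x₂ x₃ y₁ y₂ y₃ with hs | hs | hs
  · exact hs.eq_of_rel h h₁
  · exact hs.eq_of_rel h h₂
  · exact hs.eq_of_rel h h₃

theorem ne_of_rel (hrefl : ∀ x, e x x) (hf : IsEdgeConservative e f)
    (h : e (f x₁ x₂ x₃) (f y₁ y₂ y₃))
    (h₁ : e x₁ y₁ → x₁ ≠ y₁) (h₂ : e x₂ y₂ → x₂ ≠ y₂) (h₃ : e x₃ y₃ → x₃ ≠ y₃) :
    f x₁ x₂ x₃ ≠ f y₁ y₂ y₃ := by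
  rcases hf x₁ x₂ x₃ y₁ y₂ y₃ with hs | hs | hs
  · exact hs.ne_of_rel hrefl h h₁
  · exact hs.ne_of_rel hrefl h h₂
  · exact hs.ne_of_rel hrefl h h₃

theorem not_cyclic (he : Equivalence e) (hf : IsEdgeConservative e f) {c d₁ d₂ : B}
    (hc : ¬ e c d₁) (hd : e d₁ d₂) (hne : d₁ ≠ d₂) :
    ¬ ∀ x₁ x₂ x₃ : B, e (f x₁ x₂ x₃) (f x₃ x₁ x₂) := by
  intro hcyc
  have hc₂ : ¬ e c d₂ := fun h => hc (he.trans h (he.symm hd))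
  have hd₁ : ¬ e d₁ c := fun h => hc (he.symm h)
  have hd₂ : ¬ e d₂ c := fun h => hc₂ (he.symm h)
  have hrefl := he.refl
  have htr : e (f d₂ d₁ c) (f c d₁ d₂) :=
    he.trans (hcyc d₂ d₁ c) (hf.rel hrefl (hrefl c) (he.symm hd) hd)
  have hsr : e (f d₁ c d₂) (f c d₁ d₂) := he.trans (hcyc d₁ c d₂) htr
  have hpr : e (f c d₁ d₁) (f c d₁ d₂) := hf.rel hrefl (hrefl c) (hrefl d₁) hd
  have hrs : f c d₁ d₂ = f d₁ c d₂ :=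
    hf.eq_of_rel (he.symm hsr) (absurd · hc) (absurd · hd₁) fun _ => rfl
  have hrt : f c d₁ d₂ = f d₂ d₁ c :=
    hf.eq_of_rel (he.symm htr) (absurd · hc₂) (fun _ => rfl) (absurd · hd₂)
  have hpt : f c d₁ d₁ = f d₂ d₁ c :=
    hf.eq_of_rel (hrt ▸ hpr) (absurd · hc₂) (fun _ => rfl) (absurd · hd₁)
  have hps : f c d₁ d₁ ≠ f d₁ c d₂ :=
    hf.ne_of_rel hrefl (hrs ▸ hpr) (absurd · hc) (absurd · hd₁) fun _ => hne
  exact hps (hpt.trans (hrt.symm.trans hrs))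

end IsEdgeConservative

end

/-- if `e` is an equivalence relation with exactly two classes,
one of which has at least two elements, then there is no ternary operation
`f : B³ → B` that is edge-conservative w.r.t. the partition `{Δ, e∖Δ, eᶜ}`
and cyclic modulo `e`. -/
theorem stmt8 {B : Type*} (e : B → B → Prop) (he : Equivalence e)
    (htwo : ∃ c₁ c₂ : B, ¬ e c₁ c₂ ∧ ∀ x : B, e x c₁ ∨ e x c₂)
    (hbig : ∃ d₁ d₂ : B, d₁ ≠ d₂ ∧ e d₁ d₂) :
    ¬ ∃ f : B → B → B → B,
      (∀ x₁ x₂ x₃ y₁ y₂ y₃ : B,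
        SamePart e x₁ y₁ (f x₁ x₂ x₃) (f y₁ y₂ y₃) ∨
        SamePart e x₂ y₂ (f x₁ x₂ x₃) (f y₁ y₂ y₃) ∨
        SamePart e x₃ y₃ (f x₁ x₂ x₃) (f y₁ y₂ y₃)) ∧
      (∀ x₁ x₂ x₃ : B, e (f x₁ x₂ x₃) (f x₃ x₁ x₂)) := by
  rintro ⟨f, hf, hcyc⟩
  obtain ⟨c₁, c₂, hc, hall⟩ := htwo
  obtain ⟨d₁, d₂, hne, hd⟩ := hbig
  obtain ⟨c, hcd⟩ : ∃ c, ¬ e c d₁ := by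
    rcases hall d₁ with h | h
    · exact ⟨c₂, fun h' => hc (he.trans (he.symm h) (he.symm h'))⟩
    · exact ⟨c₁, fun h' => hc (he.trans h' h)⟩
  exact IsEdgeConservative.not_cyclic he hf hcd hd hne hcyc
end

section
/- Let e be an equivalence relation on a set B with at least three equivalence classes, and let n := (B×B)∖e. Let p ≥ 3 be odd. Then there is no p-ary operation f : Bᵖ → B that preserves n (if (xᵢ,yᵢ) ∈ n for all i ≤ p, then (f(x),f(y)) ∈ n) and is cyclic modulo e (for all x₁, …, x_p ∈ B, (f(x₁,…,x_p), f(x_p,x₁,…,x_{p−1})) ∈ e). -/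
/-!
Colour the odd cycle `0 → 1 → ⋯ → p-1 → 0` properly with three colours: vertex `0` gets the
third colour and the other vertices alternate between the first two, which works because
`p - 1` is even. Reading the colours as three pairwise `e`-inequivalent elements gives a tuple
`x` with `(xᵢ, x_{i-1}) ∈ n` for every `i`. Preservation of `n` then forces
`(f(x), f(x_p, x₁, …, x_{p-1})) ∈ n`, contradicting cyclicity modulo `e`.
-/

def oddCycleColoring (p : ℕ) (i : Fin p) : Fin 3 :=
  if (i : ℕ) = 0 then 2 else if Even (i : ℕ) then 1 else 0

theorem oddCycleColoring_finRotate_ne {p : ℕ} (hp : 3 ≤ p) (hodd : Odd p) (i : Fin p) :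
    oddCycleColoring p (finRotate p i) ≠ oddCycleColoring p i := by
  obtain ⟨n, rfl⟩ : ∃ n, p = n + 1 := ⟨p - 1, by omega⟩
  have hn : Even n := by simpa [Nat.odd_add_one, Nat.not_odd_iff_even] using hodd
  unfold oddCycleColoring
  rw [coe_finRotate]
  by_cases hlast : i = Fin.last n
  · subst hlast
    simp [hn, show n ≠ 0 by omega]
  · have hi : (i : ℕ) < n := Fin.val_lt_last hlast
    simp only [hlast, if_false, Nat.add_one_ne_zero, Nat.even_add_one]
    split_ifs <;> simp_all

theorem exists_fin_three_pairwise_not_rel {B : Type*} {r : B → B → Prop}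
    (hsymm : ∀ x y, r x y → r y x)
    (hthree : ∃ c₁ c₂ c₃ : B, ¬ r c₁ c₂ ∧ ¬ r c₁ c₃ ∧ ¬ r c₂ c₃) :
    ∃ c : Fin 3 → B, ∀ a b, a ≠ b → ¬ r (c a) (c b) := by
  obtain ⟨c₁, c₂, c₃, h₁₂, h₁₃, h₂₃⟩ := hthree
  refine ⟨![c₁, c₂, c₃], ?_⟩
  intro a b hab
  fin_cases a <;> fin_cases b <;> simp_all [fun x y => mt (hsymm x y)]

/-- if `e` is an equivalence relation on `B` with at least three
classes and `p ≥ 3` is odd, then there is no `p`-ary operation `f : Bᵖ → B`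
that preserves the complement `n = (B × B) ∖ e` of `e` and is cyclic modulo
`e`.  Here the cyclic shift `(x₁,…,x_p) ↦ (x_p,x₁,…,x_{p−1})` is expressed via
the inverse of the rotation `finRotate p : i ↦ i + 1` of `Fin p`. -/
theorem stmt9 {B : Type*} (e : B → B → Prop) (he : Equivalence e)
    (hthree : ∃ c₁ c₂ c₃ : B, ¬ e c₁ c₂ ∧ ¬ e c₁ c₃ ∧ ¬ e c₂ c₃)
    (p : ℕ) (hp : 3 ≤ p) (hodd : Odd p) :
    ¬ ∃ f : (Fin p → B) → B,
      (∀ x y : Fin p → B, (∀ i, ¬ e (x i) (y i)) → ¬ e (f x) (f y)) ∧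
      (∀ x : Fin p → B, e (f x) (f fun i => x ((finRotate p).symm i))) := by
  rintro ⟨f, hpres, hcyc⟩
  obtain ⟨c, hc⟩ := exists_fin_three_pairwise_not_rel (fun _ _ => he.symm) hthree
  let x : Fin p → B := c ∘ oddCycleColoring p
  refine hpres x (fun i => x ((finRotate p).symm i)) (fun i => hc _ _ ?_) (hcyc x)
  simpa only [Equiv.apply_symm_apply] using
    oddCycleColoring_finRotate_ne hp hodd ((finRotate p).symm i)
end
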